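/- arXiv:2404.10881 — 4 statements merged into one kernel-verified Lean document; each statement's English description precedes it below -/
import Mathlib

section
/- Let K = {z ∈ ℝ^d : ‖z‖_1 ≤ L√s}, let z̄ ∈ K, let ξ ∈ ℝ^d, set z̃ = z̄ + ξ, and let ẑ be the Euclidean projection of z̃ onto K. Then ‖ẑ − z̄‖_2 ≤ √(2 L ‖ξ‖_∞ √s). -/
open Finset
open scoped RealInnerProductSpace

/-!
Since `z̄ ∈ K` and `K` is convex, the variational inequality for the projection gives
`‖ẑ - z̄‖² ≤ ⟪ẑ - z̄, z̃ - z̄⟫ = ⟪ẑ - z̄, ξ⟫`. By Hölder the right side is at most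
`‖ẑ - z̄‖₁ ‖ξ‖_∞`, and `‖ẑ - z̄‖₁ ≤ 2 L √s` as both points lie in `K`.
-/

section ProjectionOntoConvex

variable {F : Type*} [NormedAddCommGroup F] [InnerProductSpace ℝ F]

theorem real_inner_sub_le_zero_of_forall_norm_le {K : Set F} (hK : Convex ℝ K) {x p y : F}
    (hp : p ∈ K) (hy : y ∈ K) (hmin : ∀ z ∈ K, ‖p - x‖ ≤ ‖z - x‖) :
    ⟪x - p, y - p⟫ ≤ 0 := by
  have : Nonempty K := ⟨⟨p, hp⟩⟩
  have hbdd : BddBelow (Set.range fun z : K => ‖x - z‖) := ⟨0, by rintro _ ⟨z, rfl⟩; positivity⟩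
  have hinf : ‖x - p‖ = ⨅ z : K, ‖x - z‖ :=
    le_antisymm (le_ciInf fun z => by simpa only [norm_sub_rev x] using hmin z z.2)
      (ciInf_le hbdd ⟨p, hp⟩)
  exact (norm_eq_iInf_iff_real_inner_le_zero hK hp).1 hinf y hy

theorem norm_sub_sq_le_inner_of_forall_norm_le {K : Set F} (hK : Convex ℝ K) {x p y : F}
    (hp : p ∈ K) (hy : y ∈ K) (hmin : ∀ z ∈ K, ‖p - x‖ ≤ ‖z - x‖) :
    ‖p - y‖ ^ 2 ≤ ⟪p - y, x - y⟫ := by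
  have hvar := real_inner_sub_le_zero_of_forall_norm_le hK hp hy hmin
  have hsplit : ⟪p - y, p - y⟫ = ⟪p - y, x - y⟫ + ⟪p - y, p - x⟫ := by
    rw [← inner_add_right]
    congr 1
    abel
  have hswap : ⟪p - y, p - x⟫ = ⟪x - p, y - p⟫ := by
    rw [← inner_neg_neg, neg_sub, neg_sub, real_inner_comm]
  rw [← real_inner_self_eq_norm_sq, hsplit, hswap]
  linarith

end ProjectionOntoConvex

def l1Ball (ι : Type*) [Fintype ι] (r : ℝ) : Set (EuclideanSpace ℝ ι) :=
  {z | ∑ i, |z i| ≤ r}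

section L1Ball

variable {ι : Type*} [Fintype ι]

theorem convex_l1Ball (r : ℝ) : Convex ℝ (l1Ball ι r) := by
  intro x hx y hy a b ha hb hab
  calc ∑ i, |(a • x + b • y) i| ≤ ∑ i, (a * |x i| + b * |y i|) := by
        gcongr with i
        simpa [abs_mul, abs_of_nonneg ha, abs_of_nonneg hb] using abs_add_le (a * x i) (b * y i)
    _ = a * ∑ i, |x i| + b * ∑ i, |y i| := by rw [sum_add_distrib, mul_sum, mul_sum]
    _ ≤ a * r + b * r := by gcongr <;> assumption
    _ = r := by rw [← add_mul, hab, one_mul]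

theorem sum_abs_sub_le_of_mem_l1Ball {r : ℝ} {x y : EuclideanSpace ℝ ι} (hx : x ∈ l1Ball ι r)
    (hy : y ∈ l1Ball ι r) : ∑ i, |(x - y) i| ≤ 2 * r :=
  calc ∑ i, |(x - y) i| ≤ ∑ i, (|x i| + |y i|) := sum_le_sum fun i _ => abs_sub (x i) (y i)
    _ ≤ 2 * r := by rw [sum_add_distrib]; linarith [hx.out, hy.out]

theorem real_inner_le_sum_abs_mul_iSup_abs (v w : EuclideanSpace ℝ ι) :
    ⟪v, w⟫ ≤ (∑ i, |v i|) * ⨆ i, |w i| := by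
  rw [PiLp.inner_apply, sum_mul]
  gcongr with i
  calc ⟪v i, w i⟫ ≤ |v i| * |w i| := by
        rw [real_inner_eq_re_inner, RCLike.inner_apply, ← abs_mul, mul_comm]
        exact le_abs_self _
    _ ≤ |v i| * ⨆ i, |w i| := by
        gcongr
        exact le_ciSup (f := fun i => |w i|) (Finite.bddAbove_range _) i

end L1Ball

theorem projection_mechanism_error_general {d s : ℕ} (L : ℝ)
    (zbar ξ zhat : EuclideanSpace ℝ (Fin d))
    (hzbar : ∑ i, |zbar i| ≤ L * Real.sqrt s)
    (hzhat_mem : ∑ i, |zhat i| ≤ L * Real.sqrt s)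
    (hzhat_min : ∀ z : EuclideanSpace ℝ (Fin d), (∑ i, |z i| ≤ L * Real.sqrt s) →
      ‖zhat - (zbar + ξ)‖ ≤ ‖z - (zbar + ξ)‖) :
    ‖zhat - zbar‖ ≤ Real.sqrt (2 * L * (⨆ i, |ξ i|) * Real.sqrt s) := by
  have hsq := norm_sub_sq_le_inner_of_forall_norm_le (K := l1Ball (Fin d) (L * Real.sqrt s))
    (convex_l1Ball _) hzhat_mem hzbar hzhat_min
  rw [add_sub_cancel_left] at hsq
  have hξ : 0 ≤ ⨆ i, |ξ i| := Real.iSup_nonneg fun i => abs_nonneg (ξ i)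
  apply Real.le_sqrt_of_sq_le
  calc ‖zhat - zbar‖ ^ 2 ≤ ⟪zhat - zbar, ξ⟫ := hsq
    _ ≤ (∑ i, |(zhat - zbar) i|) * ⨆ i, |ξ i| := real_inner_le_sum_abs_mul_iSup_abs _ _
    _ ≤ 2 * (L * Real.sqrt s) * ⨆ i, |ξ i| := by
        gcongr; exact sum_abs_sub_le_of_mem_l1Ball (r := L * Real.sqrt s) hzhat_mem hzbar
    _ = 2 * L * (⨆ i, |ξ i|) * Real.sqrt s := by ring

/-- Projection mechanism error bound: if `z̄` lies in the ℓ₁-ball `K` of radius `L√s`,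
`z̃ = z̄ + ξ`, and `ẑ` is the Euclidean projection of `z̃` onto `K`, then
`‖ẑ − z̄‖₂ ≤ √(2 L ‖ξ‖_∞ √s)`. -/
theorem projection_mechanism_error {d s : ℕ} (hs : 1 ≤ s) (L : ℝ) (hL : 0 < L)
    (zbar ξ zhat : EuclideanSpace ℝ (Fin d))
    (hzbar : ∑ i, |zbar i| ≤ L * Real.sqrt s)
    (hzhat_mem : ∑ i, |zhat i| ≤ L * Real.sqrt s)
    (hzhat_min : ∀ z : EuclideanSpace ℝ (Fin d), (∑ i, |z i| ≤ L * Real.sqrt s) →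
      ‖zhat - (zbar + ξ)‖ ≤ ‖z - (zbar + ξ)‖) :
    ‖zhat - zbar‖ ≤ Real.sqrt (2 * L * (⨆ i, |ξ i|) * Real.sqrt s) :=
  projection_mechanism_error_general L zbar ξ zhat hzbar hzhat_mem hzhat_min
end

section
/- For all natural numbers s, d with 1 ≤ s ≤ d/2, there exists a subset P of the set C_s^d of s-sparse vectors in {0, 1/√s}^d such that |P| ≥ (d/s − 1/2)^{s/2} and for all distinct u, v ∈ P, ‖u − v‖₂ ≥ 1/√2. -/
/-!
Identify a vector of `C_s^d` with its support, an `s`-subset `A` of `Fin d`; two such vectors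
are at squared distance `2 #(A \ B) / s`. A maximal family of `s`-sets that are pairwise far
(`#(A \ B) > (s - 1) / 4`) is covered by the balls `{A | #(B \ A) ≤ (s - 1) / 4}`, each of
which has at most `C(d, t)` elements, `t = 2 ⌊(s - 1) / 4⌋`, by Vandermonde's identity. So the
family has at least `C(d, s) / C(d, t)` members. This ratio is a product of `s - t ≥ s / 2`
factors `(d - j) / (j + 1)`, and pairing each factor with its mirror image, AM–GM bounds every
pair below by `(d / s - 1 / 2)²`.
-/

open Finset

theorem Nat.choose_le_choose_of_le_of_le_half {n a b : ℕ} (hab : a ≤ b) (hb : b ≤ n / 2) :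
    n.choose a ≤ n.choose b := by
  induction b, hab using Nat.le_induction with
  | base => rfl
  | succ b _ ih => exact (ih (by omega)).trans (Nat.choose_le_succ_of_lt_half_left (by omega))

theorem Nat.cast_choose_add_eq_mul_prod (n t m : ℕ) (h : t + m ≤ n) :
    (n.choose (t + m) : ℝ) = n.choose t * ∏ i ∈ range m, ((n : ℝ) - (t + i)) / (t + i + 1) := by
  induction m with
  | zero => simp
  | succ m ih =>
    have hstep : (n.choose (t + m + 1) : ℝ) * (t + m + 1) = n.choose (t + m) * (n - (t + m)) := by
      have := congrArg (Nat.cast (R := ℝ)) (Nat.choose_succ_right_eq n (t + m))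
      push_cast [Nat.cast_sub (by omega : t + m ≤ n)] at this
      exact this
    rw [prod_range_succ, ← mul_assoc, ← ih (by omega), ← add_assoc, mul_div_assoc',
      eq_div_iff (by positivity), hstep]

theorem sq_div_le_mul_div_of_add_eq {d σ x y : ℝ} (hx : 0 ≤ x) (hy : 0 ≤ y) (hxy : x + y = σ)
    (hd : σ + 1 ≤ d) :
    ((2 * d - σ) / (σ + 2)) ^ 2 ≤ (d - x) / (x + 1) * ((d - y) / (y + 1)) := by
  subst hxy
  rw [div_pow, div_mul_div_comm, div_le_div_iff₀ (by positivity) (by positivity)]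
  -- the two sides differ by `(x - y)² (d - σ - 1) (d + 1)`
  nlinarith [mul_nonneg (mul_nonneg (sq_nonneg (x - y)) (sub_nonneg.2 hd))
    (by linarith : 0 ≤ d + 1)]

theorem div_sub_half_le_of_two_mul_le {s d σ : ℝ} (hs : 1 ≤ s) (hsd : 2 * s ≤ d) (hσ : 0 ≤ σ)
    (hσs : 2 * σ ≤ 3 * s - 3) :
    d / s - 1 / 2 ≤ (2 * d - σ) / (σ + 2) := by
  rw [div_sub_div _ _ (by positivity) two_ne_zero, div_le_div_iff₀ (by positivity) (by positivity)]
  nlinarith [mul_nonneg (sub_nonneg.2 hs) (sub_nonneg.2 hsd)]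

theorem pow_le_prod_of_sq_le_mul_reflect {r : ℝ} {g : ℕ → ℝ} {m : ℕ} (hg : ∀ i < m, 0 ≤ g i)
    (h : ∀ i < m, r ^ 2 ≤ g i * g (m - 1 - i)) :
    r ^ m ≤ ∏ i ∈ range m, g i := by
  have hsq : (r ^ m) ^ 2 ≤ (∏ i ∈ range m, g i) ^ 2 := calc
    (r ^ m) ^ 2 = ∏ _i ∈ range m, r ^ 2 := by
      rw [prod_const, card_range, ← pow_mul, ← pow_mul, mul_comm]
    _ ≤ ∏ i ∈ range m, g i * g (m - 1 - i) :=
      prod_le_prod (fun _ _ => sq_nonneg r) fun i hi => h i (mem_range.1 hi)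
    _ = (∏ i ∈ range m, g i) ^ 2 := by rw [prod_mul_distrib, prod_range_reflect g m, sq]
  exact le_of_pow_le_pow_left₀ two_ne_zero (prod_nonneg fun i hi => hg i (mem_range.1 hi)) hsq

theorem rpow_mul_choose_le_choose {s d t : ℕ} (hs : 1 ≤ s) (hsd : 2 * s ≤ d) (ht : 2 * t + 1 ≤ s) :
    ((d : ℝ) / s - 1 / 2) ^ ((s : ℝ) / 2) * d.choose t ≤ d.choose s := by
  obtain ⟨m, hm⟩ : ∃ m, t + m = s := ⟨s - t, by omega⟩
  set r : ℝ := (d : ℝ) / s - 1 / 2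
  set g : ℕ → ℝ := fun i => ((d : ℝ) - (t + i)) / (t + i + 1)
  have hs' : (1 : ℝ) ≤ s := by exact_mod_cast hs
  have hsd' : 2 * (s : ℝ) ≤ d := by exact_mod_cast hsd
  have ht' : 2 * (t : ℝ) + 1 ≤ s := by exact_mod_cast ht
  have hm' : (t : ℝ) + m = s := by exact_mod_cast hm
  have hr : 1 ≤ r := by
    rw [le_sub_iff_add_le, le_div_iff₀ (by positivity)]
    linarith
  have hpair : ∀ i < m, r ^ 2 ≤ g i * g (m - 1 - i) := by
    intro i hi
    obtain ⟨j, hj, hij⟩ : ∃ j, j = m - 1 - i ∧ i + j + 1 = m := ⟨_, rfl, by omega⟩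
    have hij' : (i : ℝ) + j + 1 = m := by exact_mod_cast hij
    rw [← hj]
    calc r ^ 2 ≤ ((2 * d - ((t + i : ℝ) + (t + j))) / ((t + i : ℝ) + (t + j) + 2)) ^ 2 :=
          pow_le_pow_left₀ (zero_le_one.trans hr)
            (div_sub_half_le_of_two_mul_le hs' hsd' (by positivity) (by linarith)) 2
      _ ≤ g i * g j := sq_div_le_mul_div_of_add_eq (by positivity) (by positivity) rfl (by linarith)
  have hg : ∀ i < m, 0 ≤ g i := by
    intro i hi
    have hi' : (i : ℝ) + 1 ≤ m := by exact_mod_cast hi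
    exact div_nonneg (by linarith) (by positivity)
  calc r ^ ((s : ℝ) / 2) * d.choose t ≤ r ^ m * d.choose t := by
        gcongr
        rw [← Real.rpow_natCast]
        exact Real.rpow_le_rpow_of_exponent_le hr (by linarith)
    _ ≤ (∏ i ∈ range m, g i) * d.choose t := by
        gcongr
        exact pow_le_prod_of_sq_le_mul_reflect hg hpair
    _ = d.choose s := by rw [← hm, Nat.cast_choose_add_eq_mul_prod d t m (by omega)]; ring

theorem Finset.exists_pairwise_not_rel_card_le_mul {α : Type*} [DecidableEq α] (S : Finset α)
    (R : α → α → Prop) [DecidableRel R] (hrefl : ∀ a ∈ S, R a a)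
    (hsymm : ∀ a ∈ S, ∀ b ∈ S, R a b → R b a) {N : ℕ} (hball : ∀ a ∈ S, #(S.filter (R a)) ≤ N) :
    ∃ F ⊆ S, (F : Set α).Pairwise (fun a b => ¬R a b) ∧ #S ≤ #F * N := by
  classical
  obtain ⟨F, hF, hmax⟩ := exists_max_image
    (S.powerset.filter fun F : Finset α => (F : Set α).Pairwise (fun a b => ¬R a b)) card
    ⟨∅, mem_filter.2 ⟨empty_mem_powerset S, by simp⟩⟩
  rw [mem_filter, mem_powerset] at hF
  obtain ⟨hFS, hFsep⟩ := hF
  have hcover : S ⊆ F.biUnion fun b => S.filter (R b) := by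
    intro a ha
    by_contra hfar
    simp only [mem_biUnion, mem_filter, not_exists, not_and] at hfar
    have haF : a ∉ F := fun haF => hfar a haF ha (hrefl a ha)
    have hins := hmax (insert a F) <| mem_filter.2 ⟨mem_powerset.2 (insert_subset ha hFS), by
      rw [coe_insert, Set.pairwise_insert]
      exact ⟨hFsep, fun b hb _ => ⟨fun hab => hfar b hb ha (hsymm a ha b (hFS hb) hab),
        fun hba => hfar b hb ha hba⟩⟩⟩
    rw [card_insert_of_notMem haF] at hins
    omega
  exact ⟨F, hFS, hFsep, (card_le_card hcover).trans
    (card_biUnion_le_card_mul _ _ _ fun b hb => hball b (hFS hb))⟩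

theorem Finset.card_filter_card_sdiff_eq_le {α : Type*} [Fintype α] [DecidableEq α]
    (B : Finset α) (k : ℕ) :
    #((powersetCard #B univ).filter fun A => #(B \ A) = k) ≤
      (#B).choose k * (Fintype.card α - #B).choose k := by
  have hrecover : ∀ A : Finset α, A = (A \ B) ∪ (B \ (B \ A)) := by
    intro A; ext x; simp only [mem_union, mem_sdiff]; tauto
  calc _ ≤ #(powersetCard k B ×ˢ powersetCard k Bᶜ) := by
        refine card_le_card_of_injOn (fun A => (B \ A, A \ B)) (fun A hA => ?_) ?_
        · obtain ⟨hAcard, hk⟩ := mem_filter.1 hA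
          have hAcard : #A = #B := mem_powersetCard_univ.1 hAcard
          simp only [coe_product, Set.mem_prod, mem_coe, mem_powersetCard]
          exact ⟨⟨sdiff_subset, hk⟩, ⟨fun x hx => mem_compl.2 (mem_sdiff.1 hx).2,
            (card_sdiff_comm hAcard).trans hk⟩⟩
        · intro A₁ _ A₂ _ h
          simp only [Prod.mk.injEq] at h
          rw [hrecover A₁, hrecover A₂, h.1, h.2]
    _ = _ := by rw [card_product, card_powersetCard, card_powersetCard, card_compl]

theorem Finset.card_filter_card_sdiff_le_le_choose {α : Type*} [Fintype α] [DecidableEq α]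
    (B : Finset α) {K : ℕ} (hK : 4 * K ≤ Fintype.card α - #B) :
    #((powersetCard #B univ).filter fun A => #(B \ A) ≤ K) ≤ (Fintype.card α).choose (2 * K) := by
  set n := Fintype.card α
  have hBn : #B ≤ n := card_le_univ B
  calc _ ≤ #((range (K + 1)).biUnion fun k =>
          (powersetCard #B univ).filter fun A => #(B \ A) = k) := by
        refine card_le_card fun A hA => ?_
        simp only [mem_biUnion, mem_range, mem_filter] at hA ⊢
        exact ⟨_, Nat.lt_succ_of_le hA.2, hA.1, rfl⟩
    _ ≤ ∑ k ∈ range (K + 1), (#B).choose k * (n - #B).choose k :=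
        card_biUnion_le.trans (sum_le_sum fun k _ => card_filter_card_sdiff_eq_le B k)
    _ ≤ ∑ k ∈ range (K + 1), (#B).choose k * (n - #B).choose (2 * K - k) := by
        refine sum_le_sum fun k hk => Nat.mul_le_mul_left _ ?_
        exact Nat.choose_le_choose_of_le_of_le_half (by have := mem_range.1 hk; omega) (by omega)
    _ ≤ ∑ k ∈ range (2 * K + 1), (#B).choose k * (n - #B).choose (2 * K - k) :=
        sum_le_sum_of_subset (range_subset_range.2 (by omega))
    _ = n.choose (2 * K) := by
        conv_rhs => rw [← Nat.add_sub_cancel' hBn]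
        rw [Nat.add_choose_eq, Nat.sum_antidiagonal_eq_sum_range_succ_mk]

section SparseVec

variable {ι : Type*} [DecidableEq ι]

def sparseVec (c : ℝ) (A : Finset ι) : ι → ℝ := fun i => if i ∈ A then c else 0

theorem sparseVec_eq_zero_or_eq (c : ℝ) (A : Finset ι) (i : ι) :
    sparseVec c A i = 0 ∨ sparseVec c A i = c := by
  unfold sparseVec
  split_ifs <;> simp

variable [Fintype ι]

theorem filter_sparseVec_ne_zero {c : ℝ} (hc : c ≠ 0) (A : Finset ι) :
    univ.filter (fun i => sparseVec c A i ≠ 0) = A := by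
  ext i
  by_cases hi : i ∈ A <;> simp [sparseVec, hi, hc]

theorem sparseVec_injective {c : ℝ} (hc : c ≠ 0) : Function.Injective (sparseVec (ι := ι) c) :=
  fun A B h => by rw [← filter_sparseVec_ne_zero hc A, h, filter_sparseVec_ne_zero hc B]

theorem sum_sq_sub_sparseVec (c : ℝ) (A B : Finset ι) :
    ∑ i, (sparseVec c A i - sparseVec c B i) ^ 2 = (#(A \ B) + #(B \ A)) * c ^ 2 := by
  have hpt : ∀ i, (sparseVec c A i - sparseVec c B i) ^ 2 =
      if i ∈ A \ B ∪ B \ A then c ^ 2 else 0 := by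
    intro i
    by_cases hA : i ∈ A <;> by_cases hB : i ∈ B <;> simp [sparseVec, hA, hB]
  rw [sum_congr rfl fun i _ => hpt i, sum_ite_mem, univ_inter, sum_const, nsmul_eq_mul,
    card_union_of_disjoint disjoint_sdiff_sdiff]
  push_cast
  rfl

theorem inv_sqrt_two_le_sqrt_sum_sq_sub_sparseVec {s : ℕ} (hs : 0 < s) {A B : Finset ι}
    (hA : #A = s) (hB : #B = s) (hfar : s ≤ 4 * #(A \ B)) :
    1 / Real.sqrt 2 ≤
      Real.sqrt (∑ i, (sparseVec (1 / Real.sqrt s) A i - sparseVec (1 / Real.sqrt s) B i) ^ 2) := by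
  have hsq : (1 / Real.sqrt s) ^ 2 = 1 / s := by
    rw [div_pow, one_pow, Real.sq_sqrt (Nat.cast_nonneg s)]
  rw [sum_sq_sub_sparseVec, hsq, card_sdiff_comm (hB.trans hA.symm), one_div (Real.sqrt 2),
    ← Real.sqrt_inv]
  apply Real.sqrt_le_sqrt
  have hfar' : (s : ℝ) ≤ 4 * #(A \ B) := by exact_mod_cast hfar
  rw [mul_one_div, le_div_iff₀ (by exact_mod_cast hs)]
  linarith

end SparseVec

/-- Existence of a large packing of `s`-sparse vectors in `{0, 1/√s}^d`:
for `1 ≤ s ≤ d/2` there is a set `P` of vectors with coordinates in `{0, 1/√s}`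
and exactly `s` nonzero coordinates, with `|P| ≥ (d/s − 1/2)^(s/2)` and pairwise
ℓ₂-distance at least `1/√2`. -/
theorem sparse_packing_exists (s d : ℕ) (hs : 1 ≤ s) (hsd : 2 * s ≤ d) :
    ∃ P : Finset (Fin d → ℝ),
      (∀ u ∈ P, (∀ i, u i = 0 ∨ u i = 1 / Real.sqrt s) ∧
        (Finset.univ.filter fun i => u i ≠ 0).card = s) ∧
      ((d : ℝ) / s - 1 / 2) ^ ((s : ℝ) / 2) ≤ (P.card : ℝ) ∧
      (∀ u ∈ P, ∀ v ∈ P, u ≠ v →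
        1 / Real.sqrt 2 ≤ Real.sqrt (∑ i, (u i - v i) ^ 2)) := by
  classical
  set S : Finset (Finset (Fin d)) := powersetCard s univ
  have hS : ∀ A ∈ S, #A = s := fun A hA => mem_powersetCard_univ.1 hA
  -- `#(A \ B) ≤ (s - 1) / 4` says that the vectors of `A` and `B` are at distance `< 1/√2`
  obtain ⟨F, hFS, hFsep, hFcard⟩ := exists_pairwise_not_rel_card_le_mul S
    (fun A B => #(A \ B) ≤ (s - 1) / 4) (fun A _ => by simp)
    (fun A hA B hB h => (card_sdiff_comm ((hS B hB).trans (hS A hA).symm)).trans_le h)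
    (N := d.choose (2 * ((s - 1) / 4))) (fun B hB => by
      have hball := card_filter_card_sdiff_le_le_choose B (K := (s - 1) / 4)
        (by rw [Fintype.card_fin, hS B hB]; omega)
      rwa [hS B hB, Fintype.card_fin] at hball)
  have hc : 1 / Real.sqrt s ≠ 0 := by positivity
  refine ⟨F.image (sparseVec (1 / Real.sqrt s)), ?_, ?_, ?_⟩
  · simp only [mem_image, forall_exists_index, and_imp, forall_apply_eq_imp_iff₂]
    exact fun A hA =>
      ⟨sparseVec_eq_zero_or_eq _ A, by rw [filter_sparseVec_ne_zero hc, hS A (hFS hA)]⟩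
  · rw [card_image_of_injective _ (sparseVec_injective hc)]
    have hpos : (0 : ℝ) < d.choose (2 * ((s - 1) / 4)) := by
      exact_mod_cast Nat.choose_pos (by omega)
    refine le_of_mul_le_mul_right ((rpow_mul_choose_le_choose hs hsd (by omega)).trans ?_) hpos
    rw [card_powersetCard, card_univ, Fintype.card_fin] at hFcard
    exact_mod_cast hFcard
  · simp only [mem_image, forall_exists_index, and_imp, forall_apply_eq_imp_iff₂]
    intro A hA B hB hAB
    have hfar := hFsep hA hB (fun h => hAB (by rw [h]))
    exact inv_sqrt_two_le_sqrt_sum_sq_sub_sparseVec hs (hS A (hFS hA)) (hS B (hFS hB)) (by omega)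
end

section
/- Let f(·, z) be convex, L-Lipschitz, H-smooth on ℝ^d for each z, and let x_λ*(S) denote the unique minimizer over ℝ^d of F_S(x) + (λ/2)‖x‖², where F_S(x) = (1/n)Σᵢ f(x, zᵢ). Suppose each gradient ∇f(x, z) is s-sparse and that the ℓ₂-sensitivity bound ‖x_λ*(S) − x_λ*(S′)‖₂ ≤ 4L/(λn) holds for neighboring datasets S ≃ S′. Then the ℓ₁-sensitivity satisfies ‖x_λ*(S) − x_λ*(S′)‖₁ ≤ (2√(2s) L)/(λn) · (2H/λ + 1). -/
/-!
Subtracting the first-order conditions of the two problems and adding and subtracting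
`∇f(x', z_{i₀})` gives
`λ (x − x') = (1/n) (∑ᵢ (∇f(x', zᵢ) − ∇f(x, zᵢ)) + (∇f(x', z'_{i₀}) − ∇f(x', z_{i₀})))`.
Every bracket is a difference of two `s`-sparse gradients, so it is `2s`-sparse and its ℓ₁-norm
is at most `√(2s)` times its ℓ₂-norm. Smoothness and the ℓ₂-sensitivity bound give
`H · 4L/(λn)` for each of the `n` drift terms, and Lipschitzness gives `2L` for the swapped term.
-/

open Finset InnerProductSpace

section Gradient
variable {E : Type*} [NormedAddCommGroup E] [InnerProductSpace ℝ E] [CompleteSpace E]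
  {f g : E → ℝ} {f' g' x : E}

theorem HasGradientAt.add (hf : HasGradientAt f f' x) (hg : HasGradientAt g g' x) :
    HasGradientAt (fun y => f y + g y) (f' + g') x := by
  rw [hasGradientAt_iff_hasFDerivAt, map_add]
  exact hf.hasFDerivAt.add hg.hasFDerivAt

theorem HasGradientAt.const_mul (c : ℝ) (hf : HasGradientAt f f' x) :
    HasGradientAt (fun y => c * f y) (c • f') x := by
  rw [hasGradientAt_iff_hasFDerivAt, map_smul]
  exact hf.hasFDerivAt.const_mul c

theorem HasGradientAt.fun_sum {ι : Type*} {s : Finset ι} {f : ι → E → ℝ} {f' : ι → E}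
    (hf : ∀ i ∈ s, HasGradientAt (f i) (f' i) x) :
    HasGradientAt (fun y => ∑ i ∈ s, f i y) (∑ i ∈ s, f' i) x := by
  rw [hasGradientAt_iff_hasFDerivAt, map_sum]
  exact HasFDerivAt.fun_sum fun i hi => (hf i hi).hasFDerivAt

theorem hasGradientAt_norm_sq (x : E) : HasGradientAt (fun y => ‖y‖ ^ 2) ((2 : ℝ) • x) x := by
  have h : toDual ℝ E ((2 : ℝ) • x) = 2 • innerSL ℝ x := by
    ext y
    simp [two_mul]
  rw [hasGradientAt_iff_hasFDerivAt, h]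
  exact (hasStrictFDerivAt_norm_sq x).hasFDerivAt

theorem IsLocalMin.hasGradientAt_eq_zero (h : IsLocalMin f x) (hf : HasGradientAt f f' x) :
    f' = 0 :=
  (toDual ℝ E).map_eq_zero_iff.mp (h.hasFDerivAt_eq_zero hf.hasFDerivAt)

end Gradient

section Regularization
variable {E : Type*} [NormedAddCommGroup E] [InnerProductSpace ℝ E]
  {ι : Type*} [Fintype ι] {c lam : ℝ} {x x' : E}

theorem smul_sum_add_smul_eq_zero_of_isMin_regularized [CompleteSpace E] {f : ι → E → ℝ} {g : ι → E}
    (hf : ∀ i, HasGradientAt (f i) (g i) x)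
    (hmin : ∀ y, c * ∑ i, f i x + lam / 2 * ‖x‖ ^ 2 ≤ c * ∑ i, f i y + lam / 2 * ‖y‖ ^ 2) :
    c • ∑ i, g i + lam • x = 0 := by
  have hgrad := ((HasGradientAt.fun_sum (s := univ) fun i _ => hf i).const_mul c).add
    ((hasGradientAt_norm_sq x).const_mul (lam / 2))
  rw [← IsLocalMin.hasGradientAt_eq_zero (.of_forall hmin) hgrad,
    smul_smul, div_mul_cancel₀ lam two_ne_zero]

theorem smul_sub_eq_of_stationary {g g' : ι → E → E} (i₀ : ι) (hg : ∀ i, i ≠ i₀ → g' i = g i)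
    (hx : c • ∑ i, g i x + lam • x = 0) (hx' : c • ∑ i, g' i x' + lam • x' = 0) :
    lam • (x - x') = c • (∑ i, (g i x' - g i x) + (g' i₀ x' - g i₀ x')) := by
  have hswap : ∑ i, g' i x' - ∑ i, g i x' = g' i₀ x' - g i₀ x' := by
    rw [← sum_sub_distrib]
    exact sum_eq_single i₀ (fun i _ hi => by rw [hg i hi, sub_self]) (by simp)
  rw [sum_sub_distrib, ← hswap, smul_sub, eq_neg_of_add_eq_zero_right hx,
    eq_neg_of_add_eq_zero_right hx']
  module

end Regularization

namespace EuclideanSpace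
variable {ι : Type*} [Fintype ι]

/-- The identity into `ℓ₁`, so that `‖toL1 v‖ = ∑ i, |v i|` inherits the normed-space API. -/
def toL1 : EuclideanSpace ℝ ι →ₗ[ℝ] PiLp 1 (fun _ : ι => ℝ) :=
  (WithLp.linearEquiv 1 ℝ (ι → ℝ)).symm.toLinearMap ∘ₗ (WithLp.linearEquiv 2 ℝ (ι → ℝ)).toLinearMap

theorem norm_toL1 (v : EuclideanSpace ℝ ι) : ‖toL1 v‖ = ∑ i, |v i| := by
  simp [toL1, PiLp.norm_eq_of_L1]

theorem sum_abs_le_sqrt_mul_norm {k : ℕ} (v : EuclideanSpace ℝ ι) (hk : #{i | v i ≠ 0} ≤ k) :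
    ∑ i, |v i| ≤ √k * ‖v‖ := by
  set T : Finset ι := {i | v i ≠ 0}
  have hT : ∑ i ∈ T, |v i| = ∑ i, |v i| :=
    sum_subset (subset_univ T) fun i _ hi => by simp_all [T]
  have hCS : (∑ i ∈ T, |v i|) ^ 2 ≤ k * ‖v‖ ^ 2 := calc
    (∑ i ∈ T, |v i|) ^ 2 ≤ #T * ∑ i ∈ T, |v i| ^ 2 := sq_sum_le_card_mul_sum_sq
    _ ≤ k * ∑ i, |v i| ^ 2 := by
      gcongr
      exact subset_univ T
    _ = k * ‖v‖ ^ 2 := by simp [EuclideanSpace.norm_sq_eq]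
  rw [← hT, ← Real.sqrt_sq (norm_nonneg v), ← Real.sqrt_mul (Nat.cast_nonneg k)]
  exact Real.le_sqrt_of_sq_le hCS

theorem card_support_sub_le (u v : EuclideanSpace ℝ ι) :
    #{i | (u - v) i ≠ 0} ≤ #{i | u i ≠ 0} + #{i | v i ≠ 0} := by
  classical
  refine (card_le_card fun i hi => ?_).trans (card_union_le _ _)
  simp only [mem_filter, mem_union, mem_univ, true_and] at hi ⊢
  by_contra! h
  exact hi (by simp [h.1, h.2])

theorem norm_toL1_sub_le {s : ℕ} {u v : EuclideanSpace ℝ ι} (hu : #{i | u i ≠ 0} ≤ s)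
    (hv : #{i | v i ≠ 0} ≤ s) : ‖toL1 (u - v)‖ ≤ √(2 * s) * ‖u - v‖ := by
  have h := sum_abs_le_sqrt_mul_norm (u - v) ((card_support_sub_le u v).trans (add_le_add hu hv))
  rw [norm_toL1]
  convert h using 3
  push_cast
  ring

end EuclideanSpace

open EuclideanSpace

theorem regularized_erm_l1_sensitivity_general {d n : ℕ} (hn : 0 < n) {Z : Type*}
    (f : Z → EuclideanSpace ℝ (Fin d) → ℝ)
    (gradf : Z → EuclideanSpace ℝ (Fin d) → EuclideanSpace ℝ (Fin d))
    (hgrad : ∀ z x, HasGradientAt (f z) (gradf z x) x)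
    (L H lam : ℝ) (hH : 0 < H) (hlam : 0 < lam)
    (hLip : ∀ z x, ‖gradf z x‖ ≤ L)
    (hsmooth : ∀ z x y, ‖gradf z x - gradf z y‖ ≤ H * ‖x - y‖)
    (s : ℕ)
    (hsparse : ∀ z x, (Finset.univ.filter fun j => gradf z x j ≠ 0).card ≤ s)
    (S S' : Fin n → Z) (hneighbor : ∃ i₀, ∀ i, i ≠ i₀ → S i = S' i)
    (xS xS' : EuclideanSpace ℝ (Fin d))
    (hxS : ∀ y, (1 / n : ℝ) * ∑ i, f (S i) xS + lam / 2 * ‖xS‖ ^ 2 ≤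
      (1 / n : ℝ) * ∑ i, f (S i) y + lam / 2 * ‖y‖ ^ 2)
    (hxS' : ∀ y, (1 / n : ℝ) * ∑ i, f (S' i) xS' + lam / 2 * ‖xS'‖ ^ 2 ≤
      (1 / n : ℝ) * ∑ i, f (S' i) y + lam / 2 * ‖y‖ ^ 2)
    (hsens : ‖xS - xS'‖ ≤ 4 * L / (lam * n)) :
    ∑ j, |xS j - xS' j| ≤
      2 * Real.sqrt (2 * s) * L / (lam * n) * (2 * H / lam + 1) := by
  obtain ⟨i₀, hi₀⟩ := hneighbor
  have hid := smul_sub_eq_of_stationary i₀ (fun i hi => congrArg gradf (hi₀ i hi).symm)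
    (smul_sum_add_smul_eq_zero_of_isMin_regularized (fun i => hgrad (S i) xS) hxS)
    (smul_sum_add_smul_eq_zero_of_isMin_regularized (fun i => hgrad (S' i) xS') hxS')
  have hdrift (i : Fin n) : ‖toL1 (gradf (S i) xS' - gradf (S i) xS)‖ ≤
      √(2 * s) * (H * (4 * L / (lam * n))) := by
    refine (norm_toL1_sub_le (hsparse _ _) (hsparse _ _)).trans ?_
    gcongr
    exact (hsmooth _ _ _).trans (by rw [norm_sub_rev]; gcongr)
  have hswap : ‖toL1 (gradf (S' i₀) xS' - gradf (S i₀) xS')‖ ≤ √(2 * s) * (2 * L) := by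
    refine (norm_toL1_sub_le (hsparse _ _) (hsparse _ _)).trans ?_
    gcongr
    linarith [norm_sub_le (gradf (S' i₀) xS') (gradf (S i₀) xS'), hLip (S' i₀) xS', hLip (S i₀) xS']
  have hmain : lam * ‖toL1 (xS - xS')‖ ≤
      1 / n * (n * (√(2 * s) * (H * (4 * L / (lam * n)))) + √(2 * s) * (2 * L)) := calc
    lam * ‖toL1 (xS - xS')‖ = ‖toL1 (lam • (xS - xS'))‖ := by
      rw [map_smul, norm_smul, Real.norm_of_nonneg hlam.le]
    _ = 1 / n * ‖∑ i, toL1 (gradf (S i) xS' - gradf (S i) xS) +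
          toL1 (gradf (S' i₀) xS' - gradf (S i₀) xS')‖ := by
      rw [hid, map_smul, map_add, map_sum, norm_smul, Real.norm_of_nonneg (by positivity)]
    _ ≤ _ := by
      gcongr
      refine (norm_add_le _ _).trans (add_le_add ((norm_sum_le _ _).trans ?_) hswap)
      exact (sum_le_sum fun i _ => hdrift i).trans_eq (by simp)
  rw [norm_toL1] at hmain
  refine le_of_mul_le_mul_left (hmain.trans_eq ?_) hlam
  field_simp
  ring

/-- ℓ₁-sensitivity of the regularized ERM minimizer under gradient sparsity:
if each loss `f(·,z)` is convex, `L`-Lipschitz (gradients bounded by `L`), `H`-smooth,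
with `s`-sparse gradients, `S ≃ S'` are neighboring datasets, `xS, xS'` minimize the
respective `λ`-regularized empirical risks, and the ℓ₂-sensitivity bound
`‖xS − xS'‖₂ ≤ 4L/(λn)` holds, then `‖xS − xS'‖₁ ≤ (2√(2s)L/(λn))(2H/λ + 1)`. -/
theorem regularized_erm_l1_sensitivity {d n : ℕ} (hn : 0 < n) {Z : Type*}
    (f : Z → EuclideanSpace ℝ (Fin d) → ℝ)
    (gradf : Z → EuclideanSpace ℝ (Fin d) → EuclideanSpace ℝ (Fin d))
    (hgrad : ∀ z x, HasGradientAt (f z) (gradf z x) x)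
    (hconv : ∀ z, ConvexOn ℝ Set.univ (f z))
    (L H lam : ℝ) (hL : 0 < L) (hH : 0 < H) (hlam : 0 < lam)
    (hLip : ∀ z x, ‖gradf z x‖ ≤ L)
    (hsmooth : ∀ z x y, ‖gradf z x - gradf z y‖ ≤ H * ‖x - y‖)
    (s : ℕ) (hs : 1 ≤ s)
    (hsparse : ∀ z x, (Finset.univ.filter fun j => gradf z x j ≠ 0).card ≤ s)
    (S S' : Fin n → Z) (hneighbor : ∃ i₀, ∀ i, i ≠ i₀ → S i = S' i)
    (xS xS' : EuclideanSpace ℝ (Fin d))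
    (hxS : ∀ y, (1 / n : ℝ) * ∑ i, f (S i) xS + lam / 2 * ‖xS‖ ^ 2 ≤
      (1 / n : ℝ) * ∑ i, f (S i) y + lam / 2 * ‖y‖ ^ 2)
    (hxS' : ∀ y, (1 / n : ℝ) * ∑ i, f (S' i) xS' + lam / 2 * ‖xS'‖ ^ 2 ≤
      (1 / n : ℝ) * ∑ i, f (S' i) y + lam / 2 * ‖y‖ ^ 2)
    (hsens : ‖xS - xS'‖ ≤ 4 * L / (lam * n)) :
    ∑ j, |xS j - xS' j| ≤
      2 * Real.sqrt (2 * s) * L / (lam * n) * (2 * H / lam + 1) :=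
  regularized_erm_l1_sensitivity_general hn f gradf hgrad L H lam hH hlam hLip hsmooth s hsparse S
    S' hneighbor xS xS' hxS hxS' hsens
end

section
/- Let F_S : ℝ^d → ℝ be convex and differentiable with ‖∇F_S(x)‖₁ ≤ √(2s)·L for all x, let x* minimize F_S over a closed convex set X with ‖x*‖ ≤ D, let x_λ* minimize F_S(x) + (λ/2)‖x‖² over X, and let x̂, x̃ ∈ ℝ^d satisfy x̂ ∈ argmin_{x∈X} ‖x − x̃‖_∞ and ‖x̃ − x_λ*‖_∞ ≤ η. Then F_S(x̂) − F_S(x*) ≤ 2√(2s)·L·η + (λ/2)D². -/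
/-!
By convexity and the `ℓ¹`–`ℓ∞` Hölder inequality, `F x̂ - F x_λ ≤ ‖∇F(x̂)‖₁ ‖x̂ - x_λ‖_∞`, and
`‖x̂ - x_λ‖_∞ ≤ 2η` because `x̂` is at least as close to `x̃` as the point `x_λ ∈ X` is.
Comparing the regularized objective at `x_λ` and at `x*` gives `F x_λ - F x* ≤ (λ/2)‖x*‖²`.
-/

open Finset

section SupAbs

variable {ι : Type*}

theorem iSup_abs_nonneg (a : ι → ℝ) : 0 ≤ ⨆ j, |a j| :=
  Real.iSup_nonneg fun j => abs_nonneg (a j)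

theorem iSup_abs_sub_comm (a b : ι → ℝ) : ⨆ j, |a j - b j| = ⨆ j, |b j - a j| := by
  simp only [abs_sub_comm]

theorem abs_le_iSup_abs [Finite ι] (a : ι → ℝ) (i : ι) : |a i| ≤ ⨆ j, |a j| :=
  le_ciSup (f := fun j => |a j|) (Finite.bddAbove_range _) i

theorem iSup_abs_sub_le_add [Finite ι] (a b c : ι → ℝ) :
    ⨆ j, |a j - c j| ≤ (⨆ j, |a j - b j|) + ⨆ j, |b j - c j| :=
  Real.iSup_le
    (fun i => (abs_sub_le (a i) (b i) (c i)).trans <|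
      add_le_add (abs_le_iSup_abs (fun j => a j - b j) i) (abs_le_iSup_abs (fun j => b j - c j) i))
    (add_nonneg (iSup_abs_nonneg _) (iSup_abs_nonneg _))

theorem iSup_abs_sub_le_two_mul_of_nearest [Finite ι] {a b t : ι → ℝ} {η : ℝ}
    (hnearest : (⨆ j, |a j - t j|) ≤ ⨆ j, |b j - t j|) (hb : (⨆ j, |t j - b j|) ≤ η) :
    ⨆ j, |a j - b j| ≤ 2 * η := by
  rw [iSup_abs_sub_comm b t] at hnearest
  linarith [iSup_abs_sub_le_add a t b]

theorem sum_mul_le_sum_abs_mul_iSup_abs [Fintype ι] (a b : ι → ℝ) :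
    ∑ j, a j * b j ≤ (∑ j, |a j|) * ⨆ j, |b j| := by
  rw [sum_mul]
  refine sum_le_sum fun j _ => ?_
  calc a j * b j ≤ |a j| * |b j| := by rw [← abs_mul]; exact le_abs_self _
    _ ≤ |a j| * ⨆ k, |b k| := mul_le_mul_of_nonneg_left (abs_le_iSup_abs b j) (abs_nonneg _)

end SupAbs

theorem EuclideanSpace.inner_le_sum_abs_mul_iSup_abs {ι : Type*} [Fintype ι]
    (g v : EuclideanSpace ℝ ι) : inner ℝ g v ≤ (∑ j, |g j|) * ⨆ j, |v j| := by
  simpa only [PiLp.inner_apply, RCLike.inner_apply, conj_trivial, mul_comm (v _)]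
    using sum_mul_le_sum_abs_mul_iSup_abs g v

theorem sub_le_inner_of_add_inner_le {E : Type*} [NormedAddCommGroup E] [InnerProductSpace ℝ E]
    {f : E → ℝ} {g x y : E} (h : f x + inner ℝ g (y - x) ≤ f y) :
    f x - f y ≤ inner ℝ g (x - y) := by
  rw [← neg_sub x y, inner_neg_right] at h
  linarith

theorem sub_le_of_add_sq_norm_le {E : Type*} [SeminormedAddCommGroup E] {f : E → ℝ}
    {x y : E} {lam D : ℝ} (hlam : 0 ≤ lam) (hyD : ‖y‖ ≤ D)
    (h : f x + lam / 2 * ‖x‖ ^ 2 ≤ f y + lam / 2 * ‖y‖ ^ 2) :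
    f x - f y ≤ lam / 2 * D ^ 2 := by
  have hy : ‖y‖ ^ 2 ≤ D ^ 2 := pow_le_pow_left₀ (norm_nonneg y) hyD 2
  have hx : 0 ≤ lam / 2 * ‖x‖ ^ 2 := by positivity
  nlinarith

theorem output_perturbation_utility_general {d s : ℕ}
    (L D lam η : ℝ) (hlam : 0 < lam)
    (F : EuclideanSpace ℝ (Fin d) → ℝ)
    (gradF : EuclideanSpace ℝ (Fin d) → EuclideanSpace ℝ (Fin d))
    (hconv : ∀ x y : EuclideanSpace ℝ (Fin d),
      F x + (inner ℝ (gradF x) (y - x) : ℝ) ≤ F y)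
    (hgradl1 : ∀ x, ∑ j, |gradF x j| ≤ Real.sqrt (2 * s) * L)
    (X : Set (EuclideanSpace ℝ (Fin d)))
    (xstar : EuclideanSpace ℝ (Fin d)) (hxstarX : xstar ∈ X)
    (hxstarD : ‖xstar‖ ≤ D)
    (xlam : EuclideanSpace ℝ (Fin d)) (hxlamX : xlam ∈ X)
    (hxlammin : ∀ y ∈ X, F xlam + lam / 2 * ‖xlam‖ ^ 2 ≤ F y + lam / 2 * ‖y‖ ^ 2)
    (xhat xtilde : EuclideanSpace ℝ (Fin d))
    (hxhatmin : ∀ y ∈ X, (⨆ j, |xhat j - xtilde j|) ≤ ⨆ j, |y j - xtilde j|)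
    (hnoise : (⨆ j, |xtilde j - xlam j|) ≤ η) :
    F xhat - F xstar ≤ 2 * Real.sqrt (2 * s) * L * η + lam / 2 * D ^ 2 := by
  have hdist : ⨆ j, |xhat j - xlam j| ≤ 2 * η :=
    iSup_abs_sub_le_two_mul_of_nearest (hxhatmin xlam hxlamX) hnoise
  have hGnonneg : 0 ≤ Real.sqrt (2 * s) * L :=
    (sum_nonneg fun j _ => abs_nonneg _).trans (hgradl1 xhat)
  have hprojection : F xhat - F xlam ≤ 2 * Real.sqrt (2 * s) * L * η :=
    calc F xhat - F xlam ≤ inner ℝ (gradF xhat) (xhat - xlam) :=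
          sub_le_inner_of_add_inner_le (hconv xhat xlam)
      _ ≤ (∑ j, |gradF xhat j|) * ⨆ j, |xhat j - xlam j| :=
          EuclideanSpace.inner_le_sum_abs_mul_iSup_abs _ _
      _ ≤ Real.sqrt (2 * s) * L * (2 * η) :=
          mul_le_mul (hgradl1 xhat) hdist (iSup_abs_nonneg _) hGnonneg
      _ = 2 * Real.sqrt (2 * s) * L * η := by ring
  have hbias : F xlam - F xstar ≤ lam / 2 * D ^ 2 :=
    sub_le_of_add_sq_norm_le hlam.le hxstarD (hxlammin xstar hxstarX)
  linarith

/-- Utility of output perturbation with ℓ∞-projection: if `‖∇F_S‖₁ ≤ √(2s)L`,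
`x*` minimizes `F_S` over `X` with `‖x*‖ ≤ D`, `x_λ*` minimizes the `λ`-regularized
objective over `X`, `x̂ ∈ argmin_{x ∈ X} ‖x − x̃‖_∞`, and `‖x̃ − x_λ*‖_∞ ≤ η`, then
`F_S(x̂) − F_S(x*) ≤ 2√(2s)Lη + (λ/2)D²`. -/
theorem output_perturbation_utility {d s : ℕ} (hs : 1 ≤ s)
    (L D lam η : ℝ) (hL : 0 < L) (hD : 0 < D) (hlam : 0 < lam) (hη : 0 ≤ η)
    (F : EuclideanSpace ℝ (Fin d) → ℝ)
    (gradF : EuclideanSpace ℝ (Fin d) → EuclideanSpace ℝ (Fin d))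
    (hconv : ∀ x y : EuclideanSpace ℝ (Fin d),
      F x + (inner ℝ (gradF x) (y - x) : ℝ) ≤ F y)
    (hgradl1 : ∀ x, ∑ j, |gradF x j| ≤ Real.sqrt (2 * s) * L)
    (X : Set (EuclideanSpace ℝ (Fin d))) (hXcl : IsClosed X) (hXconv : Convex ℝ X)
    (xstar : EuclideanSpace ℝ (Fin d)) (hxstarX : xstar ∈ X)
    (hxstarmin : ∀ y ∈ X, F xstar ≤ F y) (hxstarD : ‖xstar‖ ≤ D)
    (xlam : EuclideanSpace ℝ (Fin d)) (hxlamX : xlam ∈ X)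
    (hxlammin : ∀ y ∈ X, F xlam + lam / 2 * ‖xlam‖ ^ 2 ≤ F y + lam / 2 * ‖y‖ ^ 2)
    (xhat xtilde : EuclideanSpace ℝ (Fin d)) (hxhatX : xhat ∈ X)
    (hxhatmin : ∀ y ∈ X, (⨆ j, |xhat j - xtilde j|) ≤ ⨆ j, |y j - xtilde j|)
    (hnoise : (⨆ j, |xtilde j - xlam j|) ≤ η) :
    F xhat - F xstar ≤ 2 * Real.sqrt (2 * s) * L * η + lam / 2 * D ^ 2 :=
  output_perturbation_utility_general L D lam η hlam F gradF hconv hgradl1 X xstar hxstarX hxstarD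
    xlam hxlamX hxlammin xhat xtilde hxhatmin hnoise
end
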